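/- arXiv:1804.04787 — 6 statements merged into one kernel-verified Lean document; each statement's English description precedes it below -/
import Mathlib

section
/- For every positive integer n, the chromatic number of the tournament A_n equals n. -/
/-- A tournament: a finite vertex type with an orientation of each pair of
distinct vertices. -/
structure Tournament : Type 1 where
  V : Type
  [fintypeV : Fintype V]
  adj : V → V → Prop
  irrefl : ∀ v, ¬ adj v v
  total : ∀ u v, u ≠ v → adj u v ∨ adj v u
  asymm : ∀ u v, adj u v → ¬ adj v u

attribute [instance] Tournament.fintypeV

namespace Tournament

/-- A set of vertices is transitive: the induced subtournament has no directed
cycle (equivalently, the adjacency relation is transitive on it). -/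
def IsTransSet (T : Tournament) (S : Set T.V) : Prop :=
  ∀ a ∈ S, ∀ b ∈ S, ∀ c ∈ S, T.adj a b → T.adj b c → T.adj a c

/-- The chromatic number of a tournament: least number of transitive sets
partitioning the vertex set. -/
noncomputable def chromNum (T : Tournament) : ℕ :=
  sInf {k | ∃ c : T.V → Fin k, ∀ i, T.IsTransSet {v | c v = i}}

/-- `T.Contains S`: `S` is isomorphic to a subtournament of `T`. -/
def Contains (T S : Tournament) : Prop :=
  ∃ f : S.V → T.V, Function.Injective f ∧ ∀ u v, S.adj u v ↔ T.adj (f u) (f v)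

/-- `T.Iso S`: `T` and `S` are isomorphic tournaments. -/
def Iso (T S : Tournament) : Prop :=
  ∃ f : S.V → T.V, Function.Bijective f ∧ ∀ u v, S.adj u v ↔ T.adj (f u) (f v)

/-- A set of tournaments is heroic if excluding all its members bounds the
chromatic number. -/
def Heroic (H : Set Tournament) : Prop :=
  ∃ c, ∀ T : Tournament, (∀ X ∈ H, ¬ T.Contains X) → T.chromNum ≤ c

/-- A tournament is a hero if `{H}` is heroic. -/
def IsHero (H : Tournament) : Prop :=
  ∃ c, ∀ T : Tournament, ¬ T.Contains H → T.chromNum ≤ c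

/-- A class of tournaments is hereditary if closed under subtournaments up to
isomorphism. -/
def Hereditary (C : Set Tournament) : Prop :=
  ∀ T ∈ C, ∀ S : Tournament, T.Contains S → S ∈ C

def StronglyConnected (T : Tournament) : Prop :=
  ∀ u v : T.V, Relation.ReflTransGen T.adj u v

/-- A transitive tournament (no directed cycle). -/
def IsTransTour (T : Tournament) : Prop :=
  ∀ a b c : T.V, T.adj a b → T.adj b c → T.adj a c

/-- Direction rule for Δ-partitions with 0-based part-indices (a part is at an
odd position in the 1-based sense iff its 0-based index is even).
`deltaDir i j` holds iff part `i` is complete to part `j`: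
for `i < j`, part `j` beats part `i` iff both positions are (1-based) odd. -/
def deltaDir {m : ℕ} (i j : Fin m) : Prop :=
  (i < j ∧ ¬ (Even i.1 ∧ Even j.1)) ∨ (j < i ∧ (Even i.1 ∧ Even j.1))

theorem deltaDir_irrefl {m : ℕ} (i : Fin m) : ¬ deltaDir i i := by
  rintro (⟨h, _⟩ | ⟨h, _⟩) <;> exact lt_irrefl _ h

theorem deltaDir_total {m : ℕ} {i j : Fin m} (h : i ≠ j) : deltaDir i j ∨ deltaDir j i := by
  rcases lt_or_gt_of_ne h with hl | hl
  · by_cases he : Even i.1 ∧ Even j.1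
    · exact Or.inr (Or.inr ⟨hl, he.2, he.1⟩)
    · exact Or.inl (Or.inl ⟨hl, he⟩)
  · by_cases he : Even i.1 ∧ Even j.1
    · exact Or.inl (Or.inr ⟨hl, he⟩)
    · exact Or.inr (Or.inl ⟨hl, fun hc => he ⟨hc.2, hc.1⟩⟩)

theorem deltaDir_asymm {m : ℕ} {i j : Fin m} (h : deltaDir i j) : ¬ deltaDir j i := by
  rcases h with ⟨h1, h2⟩ | ⟨h1, h2⟩ <;> rintro (⟨g1, g2⟩ | ⟨g1, g2⟩)
  · exact lt_asymm h1 g1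
  · exact h2 ⟨g2.2, g2.1⟩
  · exact g2 ⟨h2.2, h2.1⟩
  · exact lt_asymm h1 g1

/-- The tournament `Δ(F 0, F 1, …, F (m-1))` given by a Δ-partition rule:
within a part use the part's edges; between parts, edges follow `deltaDir`.
For `m = 3` this is the trisection `Δ(A,B,C)` (`X ⇒ Y`, `Y ⇒ Z`, `Z ⇒ X`),
and for `m = 2` it is `F 0 ⇒ F 1`. -/
def deltaSum {m : ℕ} (F : Fin m → Tournament) : Tournament where
  V := (i : Fin m) × (F i).V
  adj x y := deltaDir x.1 y.1 ∨
    ∃ (i : Fin m) (u v : (F i).V), (F i).adj u v ∧ x = ⟨i, u⟩ ∧ y = ⟨i, v⟩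
  irrefl := by
    rintro x (h | ⟨i, u, v, hadj, rfl, h2⟩)
    · exact deltaDir_irrefl _ h
    · injection h2 with h h'
      subst h'
      exact (F i).irrefl u hadj
  total := by
    rintro ⟨i, a⟩ ⟨j, b⟩ hne
    by_cases hij : i = j
    · subst hij
      have hab : a ≠ b := fun h => hne (by rw [h])
      rcases (F i).total a b hab with h | h
      · exact Or.inl (Or.inr ⟨i, a, b, h, rfl, rfl⟩)
      · exact Or.inr (Or.inr ⟨i, b, a, h, rfl, rfl⟩)
    · rcases deltaDir_total hij with h | h
      · exact Or.inl (Or.inl h)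
      · exact Or.inr (Or.inl h)
  asymm := by
    rintro x y hxy hyx
    rcases hxy with h | ⟨i, u, v, hadj, rfl, rfl⟩
    · rcases hyx with g | ⟨j, p, q, gadj, rfl, rfl⟩
      · exact deltaDir_asymm h g
      · exact deltaDir_irrefl _ h
    · rcases hyx with g | ⟨j, p, q, gadj, h1, h2⟩
      · exact deltaDir_irrefl _ g
      · injection h1 with hij hp
        subst hij
        obtain rfl := eq_of_heq hp
        injection h2 with h h'
        subst h'
        exact (F i).asymm u v hadj gadj

/-- The one-vertex tournament `I`. -/
def oneTour : Tournament where
  V := Unit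
  adj _ _ := False
  irrefl := fun _ h => h
  total := fun u v h => (h (Subsingleton.elim u v)).elim
  asymm := fun _ _ h => h.elim

/-- The transitive tournament `L k` on `k` vertices. -/
def linTour (k : ℕ) : Tournament where
  V := Fin k
  adj i j := i < j
  irrefl := fun v => lt_irrefl v
  total := fun _ _ h => lt_or_gt_of_ne h
  asymm := fun _ _ h => lt_asymm h

/-- `Dtour n` is the tournament `D_n`: `D_1 = I`, `D_n = Δ(I, D_{n-1}, D_{n-1})`. -/
def Dtour : ℕ → Tournament
  | 0 => oneTour
  | 1 => oneTour
  | n + 2 => deltaSum ![oneTour, Dtour (n + 1), Dtour (n + 1)]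

/-- `Atour n` is the tournament `A_n`: `A_1 = I`, and `A_n` is a Δ-sum with
`2n-1` parts, the (1-based) odd positions being single vertices and the even
positions copies of `A_{n-1}`. -/
def Atour : ℕ → Tournament
  | 0 => oneTour
  | 1 => oneTour
  | n + 2 =>
      deltaSum fun t : Fin (2 * (n + 2) - 1) => if Even t.1 then oneTour else Atour (n + 1)

/-- `Utour n` is the tournament `U_n = Δ(I, I, …, I)` with `2n-1` one-vertex parts. -/
def Utour (n : ℕ) : Tournament :=
  deltaSum fun _ : Fin (2 * n - 1) => oneTour

/-- `𝒟`: the closure of `{D_n : n ≥ 1}` under subtournaments up to isomorphism. -/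
def classD : Set Tournament :=
  {T | ∃ n : ℕ, 1 ≤ n ∧ (Dtour n).Contains T}

/-- `𝒜`: the closure of `{A_n : n ≥ 1}` under subtournaments up to isomorphism. -/
def classA : Set Tournament :=
  {T | ∃ n : ℕ, 1 ≤ n ∧ (Atour n).Contains T}

/-- `Δ₂ = Δ(L₂, L₂, L₂)`. -/
def delta2 : Tournament :=
  deltaSum ![linTour 2, linTour 2, linTour 2]

/-- The tournament `N`. -/
def Ntour : Tournament where
  V := Fin 5
  adj i j :=
    ![![false, true, false, true, false],
      ![false, false, true, true, true],
      ![true, false, false, true, true],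
      ![false, false, false, false, true],
      ![true, false, false, false, false]] i j = true
  irrefl := by decide
  total := by decide
  asymm := by decide

/-- The tournament `S₃`: `v_i → v_j` iff `j - i ∈ {1, 2} (mod 5)`. -/
def Stour3 : Tournament where
  V := Fin 5
  adj i j := (j.1 + 5 - i.1) % 5 = 1 ∨ (j.1 + 5 - i.1) % 5 = 2
  irrefl := by decide
  total := by decide
  asymm := by decide

/-- A vertex `v` outside `S` is mixed on `S` if it has both an out-neighbor and
an in-neighbor in `S`. -/
def MixedOn (T : Tournament) (v : T.V) (S : Set T.V) : Prop :=
  (∃ s ∈ S, T.adj v s) ∧ (∃ s ∈ S, T.adj s v)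

/-- A homogeneous set: `1 < |S| < |V(T)|` and no vertex outside `S` is mixed on `S`. -/
def Homog (T : Tournament) (S : Set T.V) : Prop :=
  1 < S.ncard ∧ S.ncard < Nat.card T.V ∧ ∀ v ∉ S, ¬ T.MixedOn v S

/-- A prime tournament has no homogeneous set. -/
def Prime (T : Tournament) : Prop := ¬ ∃ S : Set T.V, T.Homog S

/-- `P` is a Δ-partition of `T` with parts `P 0, …, P (m-1)`:
the parts are nonempty, partition `V(T)`, and all edges between distinct parts
follow the rule `deltaDir`. -/
def IsDeltaPartition (T : Tournament) {m : ℕ} (P : Fin m → Set T.V) : Prop :=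
  (∀ i, (P i).Nonempty) ∧
  (∀ v : T.V, ∃! i, v ∈ P i) ∧
  (∀ i j, i ≠ j → ∀ u ∈ P i, ∀ v ∈ P j, (T.adj u v ↔ deltaDir i j))

/-- The induced subtournament on a set of vertices. -/
noncomputable def induce (T : Tournament) (S : Set T.V) : Tournament where
  V := ↥S
  fintypeV := (Set.toFinite S).fintype
  adj u v := T.adj u.1 v.1
  irrefl := fun v => T.irrefl v.1
  total := fun u v h => T.total u.1 v.1 (fun hh => h (Subtype.ext hh))
  asymm := fun u v h => T.asymm u.1 v.1 h

/-- `u` and `v` are joined by an edge of the backedge graph of the ordering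
given by the list `l`: the `T`-edge between them goes backwards in `l`. -/
def BackAdj (T : Tournament) (l : List T.V) (u v : T.V) : Prop :=
  (T.adj u v ∧ [v, u].Sublist l) ∨ (T.adj v u ∧ [u, v].Sublist l)

/-- The backedge graph `B_σ(T)` of the ordering `σ = l`. -/
def backGraph (T : Tournament) (l : List T.V) : SimpleGraph T.V where
  Adj u v := T.BackAdj l u v
  symm := by
    constructor
    intro u v h
    rcases h with ⟨h, s⟩ | ⟨h, s⟩
    · exact Or.inr ⟨h, s⟩
    · exact Or.inl ⟨h, s⟩
  loopless := by
    constructor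
    intro v h
    rcases h with ⟨h, _⟩ | ⟨h, _⟩ <;> exact T.irrefl v h

/-- Forest orderings: a one-element ordering is a forest ordering, and the
concatenation `l₁ ++ l₂` of two nonempty forest orderings is one provided no
two edges of the backedge graph going between `l₁` and `l₂` lie in the same
connected component of the backedge graph. -/
inductive IsForestOrdering (T : Tournament) : List T.V → Prop
  | single (v : T.V) : IsForestOrdering T [v]
  | split (l₁ l₂ : List T.V) (h₁ : l₁ ≠ []) (h₂ : l₂ ≠ [])
      (hsep : ∀ a ∈ l₁, ∀ b ∈ l₂, ∀ c ∈ l₁, ∀ d ∈ l₂,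
        T.BackAdj (l₁ ++ l₂) a b → T.BackAdj (l₁ ++ l₂) c d →
        Relation.ReflTransGen (T.BackAdj (l₁ ++ l₂)) a c → a = c ∧ b = d)
      (f₁ : IsForestOrdering T l₁) (f₂ : IsForestOrdering T l₂) :
      IsForestOrdering T (l₁ ++ l₂)

/-- A forest tournament: one admitting a forest ordering of its vertex set. -/
def IsForestTournament (T : Tournament) : Prop :=
  ∃ l : List T.V, l.Nodup ∧ (∀ v, v ∈ l) ∧ IsForestOrdering T l

/-- The set of ordered pairs realizing backedges between `l₁` and `l₂`. -/
def splitEdges (T : Tournament) (l l₁ l₂ : List T.V) : Set (T.V × T.V) :=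
  {p | p.1 ∈ l₁ ∧ p.2 ∈ l₂ ∧ T.BackAdj l p.1 p.2}

/-- The thickness of the backedge graph of `l`: the minimum number of backedges
crossing a split of `l` into two nonempty intervals. -/
noncomputable def thickness (T : Tournament) (l : List T.V) : ℕ :=
  sInf {k | ∃ l₁ l₂ : List T.V, l = l₁ ++ l₂ ∧ l₁ ≠ [] ∧ l₂ ≠ [] ∧
    k = (T.splitEdges l l₁ l₂).ncard}

/-- The "length" `|φ x - φ y|` of an unordered pair under `φ`. -/
def phiLen {α : Type} (φ : α → ℕ) : Sym2 α → ℕ :=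
  Sym2.lift ⟨fun u v => max (φ u) (φ v) - min (φ u) (φ v), fun u v => by
    show max (φ u) (φ v) - min (φ u) (φ v) = max (φ v) (φ u) - min (φ v) (φ u)
    rw [max_comm (φ u) (φ v), min_comm (φ u) (φ v)]⟩

/-- The backedge graph of the ordering `σ_φ` induced by `φ`. -/
def backGraphPhi (T : Tournament) (φ : T.V → ℕ) : SimpleGraph T.V where
  Adj u v := (T.adj u v ∧ φ v < φ u) ∨ (T.adj v u ∧ φ u < φ v)
  symm := by
    constructor
    intro u v h
    rcases h with h | h
    · exact Or.inr h
    · exact Or.inl h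
  loopless := by
    constructor
    intro v h
    rcases h with ⟨_, h⟩ | ⟨_, h⟩ <;> exact lt_irrefl _ h

/-- Two distinct edges `e`, `f` of `B_{σ_φ}(T)` are `(r,s)`-comparable under `φ`:
some path with at most `s` edges contains both, and `1/r ≤ φ(e)/φ(f) ≤ r`. -/
def Comparable (T : Tournament) (φ : T.V → ℕ) (r s : ℕ) (e f : Sym2 T.V) : Prop :=
  e ≠ f ∧
  (∃ (a b : T.V) (p : (T.backGraphPhi φ).Walk a b),
      p.IsPath ∧ p.length ≤ s ∧ e ∈ p.edges ∧ f ∈ p.edges) ∧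
  phiLen φ e ≤ r * phiLen φ f ∧ phiLen φ f ≤ r * phiLen φ e

/-- The class `𝒞_{(r,s)}`. -/
def classC (r s : ℕ) : Set Tournament :=
  {T | ∃ φ : T.V → ℕ, (∀ v, 0 < φ v) ∧ Function.Injective φ ∧
    ∀ e ∈ (T.backGraphPhi φ).edgeSet, ∀ f ∈ (T.backGraphPhi φ).edgeSet,
      ¬ Comparable T φ r s e f}

/-- `φ` is `r`-incomparable: it is an injective positive labelling such that any
two distinct edges of `B_{σ_φ}(T)` in the same connected component have length
ratio greater than `r` (or less than `1/r`). -/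
def RIncomp (T : Tournament) (φ : T.V → ℕ) (r : ℕ) : Prop :=
  (∀ v, 0 < φ v) ∧ Function.Injective φ ∧
  ∀ e ∈ (T.backGraphPhi φ).edgeSet, ∀ f ∈ (T.backGraphPhi φ).edgeSet, e ≠ f →
    (∃ a b, a ∈ e ∧ b ∈ f ∧ (T.backGraphPhi φ).Reachable a b) →
    (r * phiLen φ f < phiLen φ e ∨ r * phiLen φ e < phiLen φ f)

/-- `l` is an ordering of the vertex set of `T`. -/
def IsOrdering (T : Tournament) (l : List T.V) : Prop :=
  l.Nodup ∧ ∀ v, v ∈ l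

/-- The ordering `l` is incomparable: for every `r ≥ 1` there is an
`r`-incomparable `φ` with `σ_φ = l` (i.e. `φ` strictly increasing along `l`). -/
def IsIncompOrdering (T : Tournament) (l : List T.V) : Prop :=
  ∀ r : ℕ, 0 < r → ∃ φ : T.V → ℕ, RIncomp T φ r ∧ l.Pairwise (fun u v => φ u < φ v)

end Tournament

/-!
The upper bound colours all singleton parts of `A_{n+1}` with one new colour and every copy of
`A_n` with the same `n` colours: each colour class then meets the copies in sets ordered forwards
and the singletons in sets ordered backwards, so it stays transitive. For the lower bound, a
colouring of `A_{n+1}` with `n` colours uses every colour on every copy of `A_n`, and two of the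
`n + 1` singletons `s_a`, `s_b` (`a < b`) share a colour; a vertex `v` of that colour in the copy
right after `s_a` gives the monochromatic cycle `s_a → v → s_b → s_a`.
-/

namespace Tournament

section Coloring

variable {T : Tournament} {α β : Type*}

def IsTransColoring (T : Tournament) (c : T.V → α) : Prop :=
  ∀ a, T.IsTransSet {v | c v = a}

theorem IsTransColoring.of_injective {c : T.V → α} (hc : Function.Injective c) :
    IsTransColoring T c := by
  intro a x hx y hy _ _ hxy _
  obtain rfl : x = y := hc (hx.trans hy.symm)
  exact absurd hxy (T.irrefl x)

theorem isTransColoring_comp_iff {c : T.V → α} {f : α → β} (hf : Function.Injective f) :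
    IsTransColoring T (f ∘ c) ↔ IsTransColoring T c := by
  refine ⟨fun h a => by simpa only [Function.comp_apply, hf.eq_iff] using h (f a), ?_⟩
  intro h b x hx y hy z hz
  exact h (c x) x rfl y (hf (hy.trans hx.symm)) z (hf (hz.trans hx.symm))

theorem chromNum_le_card [Fintype α] {c : T.V → α} (hc : IsTransColoring T c) :
    T.chromNum ≤ Fintype.card α :=
  Nat.sInf_le ⟨Fintype.equivFin α ∘ c, (isTransColoring_comp_iff (Equiv.injective _)).2 hc⟩

theorem exists_isTransColoring_of_chromNum_le {k : ℕ} (h : T.chromNum ≤ k) :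
    ∃ c : T.V → Fin k, IsTransColoring T c := by
  have hne : {k | ∃ c : T.V → Fin k, IsTransColoring T c}.Nonempty :=
    ⟨_, _, .of_injective (Fintype.equivFin T.V).injective⟩
  obtain ⟨c, hc⟩ := Nat.sInf_mem hne
  exact ⟨Fin.castLE h ∘ c, (isTransColoring_comp_iff (Fin.castLE_injective h)).2 hc⟩

theorem IsTransColoring.surjective [Fintype α] {c : T.V → α} (hc : IsTransColoring T c)
    (h : Fintype.card α ≤ T.chromNum) : Function.Surjective c := by
  classical
  by_contra hns
  obtain ⟨a, ha⟩ : ∃ a, ∀ v, c v ≠ a := by simpa [Function.Surjective] using hns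
  have hle := chromNum_le_card (c := fun v => (⟨c v, ha v⟩ : {x // x ≠ a}))
    ((isTransColoring_comp_iff Subtype.val_injective).1 hc)
  have hcard : Fintype.card {x // x ≠ a} = Fintype.card α - 1 := Set.card_ne_eq a
  have hpos : 0 < Fintype.card α := Fintype.card_pos_iff.2 ⟨a⟩
  omega

theorem chromNum_pos [Nonempty T.V] : 0 < T.chromNum := by
  by_contra! h
  obtain ⟨c, -⟩ := exists_isTransColoring_of_chromNum_le h
  exact (c (Classical.arbitrary _)).elim0

end Coloring

theorem chromNum_oneTour : oneTour.chromNum = 1 :=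
  le_antisymm (chromNum_le_card (IsTransColoring.of_injective (T := oneTour) Function.injective_id))
    (by have : Nonempty oneTour.V := ⟨()⟩; exact chromNum_pos)

theorem isTransTour_oneTour : oneTour.IsTransTour :=
  fun _ _ _ h _ => h.elim

theorem deltaDir_iff_lt_of_not_even_left {m : ℕ} {i j : Fin m} (hi : ¬ Even i.1) :
    deltaDir i j ↔ i < j := by
  simp [deltaDir, hi]

theorem deltaDir_iff_lt_of_not_even_right {m : ℕ} {i j : Fin m} (hj : ¬ Even j.1) :
    deltaDir i j ↔ i < j := by
  simp [deltaDir, hj]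

theorem deltaDir_iff_gt_of_even {m : ℕ} {i j : Fin m} (hi : Even i.1) (hj : Even j.1) :
    deltaDir i j ↔ j < i := by
  simp [deltaDir, hi, hj]

section DeltaSum

variable {m : ℕ} {F : Fin m → Tournament}

theorem deltaSum_adj_same (i : Fin m) (u v : (F i).V) :
    (deltaSum F).adj ⟨i, u⟩ ⟨i, v⟩ ↔ (F i).adj u v := by
  constructor
  · rintro (h | ⟨j, p, q, h, e1, e2⟩)
    · exact absurd h (deltaDir_irrefl i)
    · obtain ⟨rfl, hp⟩ := Sigma.mk.inj_iff.mp e1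
      obtain ⟨-, hq⟩ := Sigma.mk.inj_iff.mp e2
      rwa [eq_of_heq hp, eq_of_heq hq]
  · exact fun h => Or.inr ⟨i, u, v, h, rfl, rfl⟩

theorem deltaSum_adj_of_ne {i j : Fin m} (hij : i ≠ j) (u : (F i).V) (v : (F j).V) :
    (deltaSum F).adj ⟨i, u⟩ ⟨j, v⟩ ↔ deltaDir i j := by
  refine ⟨?_, Or.inl⟩
  rintro (h | ⟨k, p, q, -, e1, e2⟩)
  · exact h
  · exact absurd ((congrArg Sigma.fst e1).trans (congrArg Sigma.fst e2).symm) hij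

theorem IsTransSet.deltaSum_fiber {S : Set (deltaSum F).V} (hS : (deltaSum F).IsTransSet S)
    (t : Fin m) : (F t).IsTransSet {u | ⟨t, u⟩ ∈ S} := by
  intro a ha b hb c hc hab hbc
  rw [← deltaSum_adj_same] at hab hbc ⊢
  exact hS _ ha _ hb _ hc hab hbc

theorem isTransSet_deltaSum {S : Set (deltaSum F).V} (J : Set (Fin m))
    (hSJ : ∀ x ∈ S, x.1 ∈ J)
    (hJ : ∀ i ∈ J, ∀ j ∈ J, ∀ k ∈ J, deltaDir i j → deltaDir j k → deltaDir i k)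
    (hfib : ∀ t, (F t).IsTransSet {u | ⟨t, u⟩ ∈ S}) : (deltaSum F).IsTransSet S := by
  rintro ⟨i, a⟩ ha ⟨j, b⟩ hb ⟨k, c⟩ hc hab hbc
  obtain rfl | hij := eq_or_ne i j
  · obtain rfl | hjk := eq_or_ne i k
    · rw [deltaSum_adj_same] at hab hbc ⊢
      exact hfib i a ha b hb c hc hab hbc
    · rw [deltaSum_adj_of_ne hjk] at hbc ⊢
      exact hbc
  · rw [deltaSum_adj_of_ne hij] at hab
    obtain rfl | hjk := eq_or_ne j k
    · rwa [deltaSum_adj_of_ne hij]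
    · rw [deltaSum_adj_of_ne hjk] at hbc
      obtain rfl | hik := eq_or_ne i k
      · exact absurd hbc (deltaDir_asymm hab)
      · rw [deltaSum_adj_of_ne hik]
        exact hJ i (hSJ _ ha) j (hSJ _ hb) k (hSJ _ hc) hab hbc

theorem chromNum_deltaSum_le {k : ℕ} (hE : ∀ t, Even t.1 → (F t).IsTransTour)
    (hO : ∀ t, ¬ Even t.1 → (F t).chromNum ≤ k) : (deltaSum F).chromNum ≤ k + 1 := by
  choose c hc using fun t (ht : ¬ Even t.1) => exists_isTransColoring_of_chromNum_le (hO t ht)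
  let col : (deltaSum F).V → Fin (k + 1) := fun x =>
    if h : Even x.1.1 then Fin.last k else (c x.1 h x.2).castSucc
  have hlast : ∀ x, col x = Fin.last k ↔ Even x.1.1 := fun x => by
    by_cases h : Even x.1.1 <;> simp [col, h, Fin.castSucc_ne_last]
  have hcast : ∀ x j, col x = j.castSucc ↔ ∃ h : ¬ Even x.1.1, c x.1 h x.2 = j := fun x j => by
    by_cases h : Even x.1.1 <;> simp [col, h, (Fin.castSucc_ne_last j).symm]
  refine (chromNum_le_card (c := col) fun i => ?_).trans_eq (Fintype.card_fin _)
  induction i using Fin.lastCases with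
  | last =>
    refine isTransSet_deltaSum {t | Even t.1} (fun x hx => (hlast x).1 hx)
      (fun i hi j hj l hl => ?_) fun t => ?_
    · rw [deltaDir_iff_gt_of_even hi hj, deltaDir_iff_gt_of_even hj hl,
        deltaDir_iff_gt_of_even hi hl]
      exact fun h1 h2 => h2.trans h1
    · by_cases ht : Even t.1
      · exact fun a _ b _ d _ => hE t ht a b d
      · exact fun a ha => absurd ((hlast _).1 ha) ht
  | cast j =>
    refine isTransSet_deltaSum {t | ¬ Even t.1} (fun x hx => ((hcast x j).1 hx).1)
      (fun i hi j hj l hl => ?_) fun t => ?_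
    · rw [deltaDir_iff_lt_of_not_even_left hi, deltaDir_iff_lt_of_not_even_left hj,
        deltaDir_iff_lt_of_not_even_left hi]
      exact lt_trans
    · intro a ha b hb d hd
      obtain ⟨ht, ha⟩ := (hcast _ j).1 ha
      exact hc t ht j a ha b ((hcast _ j).1 hb).2 d ((hcast _ j).1 hd).2

theorem succ_le_chromNum_deltaSum {k : ℕ} (hm : 2 * k + 1 ≤ m)
    (hE : ∀ t, Even t.1 → Nonempty (F t).V) (hO : ∀ t, ¬ Even t.1 → k ≤ (F t).chromNum) :
    k + 1 ≤ (deltaSum F).chromNum := by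
  by_contra! h
  obtain ⟨c, hc⟩ := exists_isTransColoring_of_chromNum_le (Nat.lt_succ_iff.mp h)
  have hsurj (t : Fin m) (ht : ¬ Even t.1) : Function.Surjective fun u => c ⟨t, u⟩ :=
    IsTransColoring.surjective (fun i => (hc i).deltaSum_fiber t)
      ((Fintype.card_fin k).trans_le (hO t ht))
  let s (a : Fin (k + 1)) : (deltaSum F).V :=
    ⟨⟨2 * a, by omega⟩, Classical.choice (hE _ (even_two_mul _))⟩
  obtain ⟨a, b, hab, hcol⟩ := Fintype.exists_ne_map_eq_of_card_lt (c ∘ s) (by simp)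
  wlog hlt : a < b generalizing a b
  · exact this b a hab.symm hcol.symm (lt_of_le_of_ne (not_lt.mp hlt) hab.symm)
  have hodd : ¬ Even (2 * a.1 + 1) := by simp
  obtain ⟨v, hv⟩ := hsurj ⟨2 * a + 1, by omega⟩ hodd (c (s a))
  have hsv : (deltaSum F).adj (s a) ⟨_, v⟩ := by
    rw [deltaSum_adj_of_ne (by simp only [ne_eq, Fin.ext_iff]; omega),
      deltaDir_iff_lt_of_not_even_right hodd, Fin.lt_def]
    dsimp only; omega
  have hvs : (deltaSum F).adj ⟨_, v⟩ (s b) := by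
    rw [deltaSum_adj_of_ne (by simp only [ne_eq, Fin.ext_iff]; omega),
      deltaDir_iff_lt_of_not_even_left hodd, Fin.lt_def]
    dsimp only; omega
  have hss : (deltaSum F).adj (s b) (s a) := by
    rw [deltaSum_adj_of_ne (by simp only [ne_eq, Fin.ext_iff]; omega),
      deltaDir_iff_gt_of_even (even_two_mul _) (even_two_mul _), Fin.lt_def]
    dsimp only; omega
  exact (deltaSum F).asymm _ _ hss (hc _ _ rfl _ hv _ hcol.symm hsv hvs)

end DeltaSum

end Tournament

open Tournament in
/-- For every positive integer `n`, the chromatic number of the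
tournament `A_n` equals `n`. -/
theorem chromNum_Atour (n : ℕ) (hn : 1 ≤ n) : (Atour n).chromNum = n := by
  induction n, hn using Nat.le_induction with
  | base => exact chromNum_oneTour
  | succ n hn ih =>
    obtain ⟨m, rfl⟩ := Nat.exists_eq_add_of_le' hn
    refine le_antisymm (chromNum_deltaSum_le (fun t ht => ?_) fun t ht => ?_)
      (succ_le_chromNum_deltaSum (by omega) (fun t ht => ?_) fun t ht => ?_)
    · simpa only [if_pos ht] using isTransTour_oneTour
    · simp only [if_neg ht, ih, le_refl]
    · rw [if_pos ht]
      exact ⟨()⟩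
    · simp only [if_neg ht, ih, le_refl]
end

section
/- Let T be a strongly connected tournament belonging to 𝒜. If S is a maximal homogeneous set of T and ({v_1}, X_1, {v_2}, X_2, …, X_{n−1}, {v_n}) is a Δ-partition of T whose odd-indexed parts are single vertices, then S = X_k for some 1 ≤ k ≤ n−1. -/
/-! Edges between distinct parts of a Δ-partition only depend on the parts, so a part with at
least two vertices is homogeneous, and a maximal homogeneous set contained in a part equals it.
A homogeneous set `S` meeting two parts of equal parity contains every part strictly between
them (each vertex there is beaten by a vertex of `S` and beats another one); hence if `S` meets
two parts at all, it meets parts of both parities. Then the singleton parts `{v₁}` and `{vₙ}`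
would be mixed on `S` unless they lie in `S`, so `S` contains every part: `S = V(T)`. -/

namespace Tournament

theorem mem_of_adj_of_adj {T : Tournament} {S : Set T.V} (hS : ∀ v ∉ S, ¬ T.MixedOn v S)
    {x y z : T.V} (hy : y ∈ S) (hz : z ∈ S) (hyx : T.adj y x) (hxz : T.adj x z) : x ∈ S :=
  by_contra fun hx => hS x hx ⟨⟨z, hz, hxz⟩, y, hy, hyx⟩

namespace IsDeltaPartition

variable {T : Tournament} {m : ℕ} {P : Fin m → Set T.V} {S : Set T.V}

theorem exists_mem (hP : T.IsDeltaPartition P) (v : T.V) : ∃ i, v ∈ P i :=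
  (hP.2.1 v).exists

theorem eq_of_mem (hP : T.IsDeltaPartition P) {v : T.V} {i j : Fin m} (hi : v ∈ P i)
    (hj : v ∈ P j) : i = j :=
  (hP.2.1 v).unique hi hj

theorem adj_of_lt (hP : T.IsDeltaPartition P) {i j : Fin m} {u v : T.V} (hu : u ∈ P i)
    (hv : v ∈ P j) (hij : i < j) (hpar : ¬(Even i.1 ∧ Even j.1)) : T.adj u v :=
  (hP.2.2 i j hij.ne u hu v hv).2 (Or.inl ⟨hij, hpar⟩)

theorem adj_of_even_of_lt (hP : T.IsDeltaPartition P) {i j : Fin m} {u v : T.V} (hu : u ∈ P i)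
    (hv : v ∈ P j) (hji : j < i) (hi : Even i.1) (hj : Even j.1) : T.adj u v :=
  (hP.2.2 i j hji.ne' u hu v hv).2 (Or.inr ⟨hji, hi, hj⟩)

theorem homog_of_one_lt_ncard (hP : T.IsDeltaPartition P) {i j : Fin m} (hji : j ≠ i)
    (hcard : 1 < (P i).ncard) : T.Homog (P i) := by
  refine ⟨hcard, Set.ncard_lt_card fun huniv => ?_, ?_⟩
  · obtain ⟨x, hx⟩ := hP.1 j
    exact hji (hP.eq_of_mem hx (huniv ▸ Set.mem_univ x))
  · rintro v hv ⟨⟨s, hs, hvs⟩, t, ht, htv⟩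
    obtain ⟨k, hk⟩ := hP.exists_mem v
    have hki : k ≠ i := fun h => hv (h ▸ hk)
    exact deltaDir_asymm ((hP.2.2 k i hki v hk s hs).1 hvs)
      ((hP.2.2 i k hki.symm t ht v hk).1 htv)

theorem subset_of_lt_of_lt (hP : T.IsDeltaPartition P) (hS : ∀ v ∉ S, ¬ T.MixedOn v S)
    {a c k : Fin m} (ha : (S ∩ P a).Nonempty) (hc : (S ∩ P c).Nonempty)
    (hac : Even a.1 ↔ Even c.1) (hak : a < k) (hkc : k < c) : P k ⊆ S := by
  obtain ⟨u, hu, hua⟩ := ha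
  obtain ⟨w, hw, hwc⟩ := hc
  intro x hx
  by_cases hak' : Even a.1 ∧ Even k.1
  · exact mem_of_adj_of_adj hS hw hu (hP.adj_of_even_of_lt hwc hx hkc (hac.1 hak'.1) hak'.2)
      (hP.adj_of_even_of_lt hx hua hak hak'.2 hak'.1)
  · exact mem_of_adj_of_adj hS hu hw (hP.adj_of_lt hua hx hak hak')
      (hP.adj_of_lt hx hwc hkc fun h => hak' ⟨hac.2 h.2, h.1⟩)

theorem exists_odd_even_of_ne (hP : T.IsDeltaPartition P) (hS : ∀ v ∉ S, ¬ T.MixedOn v S)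
    {a c : Fin m} (ha : (S ∩ P a).Nonempty) (hc : (S ∩ P c).Nonempty) (hac : a ≠ c) :
    ∃ l e : Fin m, ¬Even l.1 ∧ Even e.1 ∧ (S ∩ P l).Nonempty ∧ (S ∩ P e).Nonempty := by
  wlog hlt : a < c generalizing a c
  · exact this hc ha hac.symm (lt_of_le_of_ne (not_lt.1 hlt) hac.symm)
  by_cases hpar : Even a.1 ↔ Even c.1
  · have hb : a.1 + 1 < m := by have := c.isLt; omega
    set b : Fin m := ⟨a.1 + 1, hb⟩
    have hbc : b < c := by
      rw [Nat.even_iff, Nat.even_iff] at hpar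
      show a.1 + 1 < c.1
      have : a.1 < c.1 := hlt
      omega
    obtain ⟨x, hx⟩ := hP.1 b
    have hb' : (S ∩ P b).Nonempty :=
      ⟨x, hP.subset_of_lt_of_lt hS ha hc hpar (Nat.lt_succ_self _) hbc hx, hx⟩
    by_cases hae : Even a.1
    · exact ⟨b, a, by simp [b, Nat.even_add_one, hae], hae, hb', ha⟩
    · exact ⟨a, b, hae, by simpa [b, Nat.even_add_one] using hae, ha, hb'⟩
  · by_cases hae : Even a.1
    · exact ⟨c, a, fun h => hpar (iff_of_true hae h), hae, hc, ha⟩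
    · exact ⟨a, c, hae, not_not.1 fun h => hpar (iff_of_false hae h), ha, hc⟩

theorem mem_of_le_of_le (hP : T.IsDeltaPartition P) (hS : ∀ v ∉ S, ¬ T.MixedOn v S)
    {f l e : Fin m} {x : T.V} (hf : Even f.1) (hsub : (P f).Subsingleton) (hx : x ∈ P f)
    (hlodd : ¬Even l.1) (heven : Even e.1) (hl : (S ∩ P l).Nonempty) (he : (S ∩ P e).Nonempty)
    (hfl : f ≤ l) (hfe : f ≤ e) : x ∈ S := by
  obtain ⟨y, hy, hyl⟩ := hl
  obtain ⟨z, hz, hze⟩ := he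
  rcases hfe.eq_or_lt with rfl | hfe
  · exact hsub hze hx ▸ hz
  have hfl : f < l := hfl.lt_of_ne (by rintro rfl; exact hlodd hf)
  exact mem_of_adj_of_adj hS hz hy (hP.adj_of_even_of_lt hze hx hfe heven hf)
    (hP.adj_of_lt hx hyl hfl fun h => hlodd h.2)

theorem mem_of_ge_of_ge (hP : T.IsDeltaPartition P) (hS : ∀ v ∉ S, ¬ T.MixedOn v S)
    {f l e : Fin m} {x : T.V} (hf : Even f.1) (hsub : (P f).Subsingleton) (hx : x ∈ P f)
    (hlodd : ¬Even l.1) (heven : Even e.1) (hl : (S ∩ P l).Nonempty) (he : (S ∩ P e).Nonempty)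
    (hlf : l ≤ f) (hef : e ≤ f) : x ∈ S := by
  obtain ⟨y, hy, hyl⟩ := hl
  obtain ⟨z, hz, hze⟩ := he
  rcases hef.eq_or_lt with rfl | hef
  · exact hsub hze hx ▸ hz
  have hlf : l < f := hlf.lt_of_ne (by rintro rfl; exact hlodd hf)
  exact mem_of_adj_of_adj hS hy hz (hP.adj_of_lt hyl hx hlf fun h => hlodd h.1)
    (hP.adj_of_even_of_lt hx hze hef hf heven)

theorem eq_univ_of_inter_nonempty_of_ne {n : ℕ} {P : Fin (2 * n - 1) → Set T.V} (hP : T.IsDeltaPartition P)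
    (hsing : ∀ i : Fin (2 * n - 1), Even i.1 → ∃ v, P i = {v})
    (hS : ∀ v ∉ S, ¬ T.MixedOn v S) {a c : Fin (2 * n - 1)} (ha : (S ∩ P a).Nonempty)
    (hc : (S ∩ P c).Nonempty) (hac : a ≠ c) : S = Set.univ := by
  obtain ⟨l, e, hlodd, heven, hl, he⟩ := hP.exists_odd_even_of_ne hS ha hc hac
  have hm := a.isLt
  set first : Fin (2 * n - 1) := ⟨0, by omega⟩
  set last : Fin (2 * n - 1) := ⟨2 * n - 2, by omega⟩
  have hfirst : Even first.1 := Even.zero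
  have hlast : Even last.1 := ⟨n - 1, by simp only [last]; omega⟩
  obtain ⟨x, hx⟩ := hsing first hfirst
  obtain ⟨x', hx'⟩ := hsing last hlast
  have hxS : x ∈ S := hP.mem_of_le_of_le hS hfirst (hx ▸ Set.subsingleton_singleton)
    (hx ▸ rfl) hlodd heven hl he (Nat.zero_le _) (Nat.zero_le _)
  have hx'S : x' ∈ S := hP.mem_of_ge_of_ge hS hlast (hx' ▸ Set.subsingleton_singleton)
    (hx' ▸ rfl) hlodd heven hl he (by have := l.isLt; simp only [Fin.le_def, last]; omega)
    (by have := e.isLt; simp only [Fin.le_def, last]; omega)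
  refine Set.eq_univ_of_forall fun v => ?_
  obtain ⟨k, hk⟩ := hP.exists_mem v
  by_cases h0 : k = first
  · rw [h0, hx] at hk
    exact hk ▸ hxS
  by_cases hL : k = last
  · rw [hL, hx'] at hk
    exact hk ▸ hx'S
  rw [← Fin.val_eq_val] at h0 hL
  exact hP.subset_of_lt_of_lt hS ⟨x, hxS, hx ▸ rfl⟩ ⟨x', hx'S, hx' ▸ rfl⟩
    (iff_of_true hfirst hlast) (Fin.lt_def.2 (by simp only [first] at h0 ⊢; omega))
    (Fin.lt_def.2 (by have := k.isLt; simp only [last] at hL ⊢; omega)) hk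

theorem exists_subset_of_ne_univ {n : ℕ} {P : Fin (2 * n - 1) → Set T.V}
    (hP : T.IsDeltaPartition P) (hsing : ∀ i : Fin (2 * n - 1), Even i.1 → ∃ v, P i = {v})
    (hS : ∀ v ∉ S, ¬ T.MixedOn v S) (hne : S ≠ Set.univ) (hSne : S.Nonempty) :
    ∃ i, S ⊆ P i := by
  by_contra! h
  obtain ⟨u, hu⟩ := hSne
  obtain ⟨a, hua⟩ := hP.exists_mem u
  obtain ⟨w, hw, hwa⟩ := Set.not_subset.1 (h a)
  obtain ⟨c, hwc⟩ := hP.exists_mem w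
  exact hne (hP.eq_univ_of_inter_nonempty_of_ne hsing hS ⟨u, hu, hua⟩ ⟨w, hw, hwc⟩ fun hac => hwa (hac ▸ hwc))

end IsDeltaPartition

end Tournament

open Tournament in
theorem maximal_homog_eq_part_general (T : Tournament) (S : Set T.V) (hS : T.Homog S)
    (hmax : ∀ S' : Set T.V, T.Homog S' → S ⊆ S' → S = S')
    (n : ℕ) (P : Fin (2 * n - 1) → Set T.V)
    (hP : T.IsDeltaPartition P)
    (hsing : ∀ i : Fin (2 * n - 1), Even i.1 → ∃ v, P i = {v}) :
    ∃ i : Fin (2 * n - 1), Odd i.1 ∧ S = P i := by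
  obtain ⟨hcard, hlt, hmixed⟩ := hS
  obtain ⟨i, hi⟩ := hP.exists_subset_of_ne_univ hsing hmixed
    (fun h => hlt.ne (h ▸ Set.ncard_univ T.V)) (Set.nonempty_of_ncard_ne_zero (by omega))
  have hcard' : 1 < (P i).ncard := hcard.trans_le (Set.ncard_le_ncard hi)
  have hodd : Odd i.1 := Nat.not_even_iff_odd.1 fun he => by
    obtain ⟨v, hv⟩ := hsing i he
    rw [hv, Set.ncard_singleton] at hcard'
    exact lt_irrefl 1 hcard'
  have h0 : (⟨0, i.pos⟩ : Fin (2 * n - 1)) ≠ i := fun h =>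
    Nat.not_odd_zero (by rwa [← h] at hodd)
  exact ⟨i, hodd, hmax _ (hP.homog_of_one_lt_ncard h0 hcard') hi⟩

open Tournament in
/-- In a strongly connected tournament of `𝒜`, every maximal
homogeneous set equals one of the (1-based) even-indexed parts of any
Δ-partition whose odd-indexed parts are singletons. -/
theorem maximal_homog_eq_part (T : Tournament) (hT : T ∈ classA)
    (hsc : T.StronglyConnected) (S : Set T.V) (hS : T.Homog S)
    (hmax : ∀ S' : Set T.V, T.Homog S' → S ⊆ S' → S = S')
    (n : ℕ) (hn : 2 ≤ n) (P : Fin (2 * n - 1) → Set T.V)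
    (hP : T.IsDeltaPartition P)
    (hsing : ∀ i : Fin (2 * n - 1), Even i.1 → ∃ v, P i = {v}) :
    ∃ i : Fin (2 * n - 1), Odd i.1 ∧ S = P i :=
  maximal_homog_eq_part_general T S hS hmax n P hP hsing
end

section
/- Let T be a tournament belonging to 𝒜 with at least three vertices. Then T is prime if and only if T is isomorphic to U_n for some integer n ≥ 2. -/
namespace Tournament

/-!
Index the parts of a Δ-partition from `0`, as `deltaDir` does, and let `finDelta m` be the
tournament on `Fin m` whose edges follow `deltaDir`, so that `U_n` is `finDelta (2 * n - 1)`.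

If a prime tournament `T` sits inside `A_m`, the vertices of `T` lying in one part of the
Δ-partition of `A_m` form a homogeneous set unless they are all of `T`. So either `T` lies in a
part, and we descend to `A_{m-1}`, or distinct vertices lie in distinct parts and `T` embeds in
`finDelta (2 * m - 1)`. List the vertices of a prime `T ⊆ finDelta m` by increasing position: two
consecutive ones of equal parity would form a homogeneous pair, and an odd first (last) position
would make that vertex a source (sink). So the parities alternate, starting and ending even, and
`T` is a copy of `finDelta s` with `s` odd.

Conversely, in `finDelta m` with `m` odd, two vertices at distance at least two are separated by
a vertex between them, so a homogeneous set contains two consecutive vertices. These are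
separated by every even vertex, so it contains `0` and `m - 1`, which are separated by every
odd vertex.
-/

open Function

variable {T S R : Tournament}

lemma deltaDir_iff {m : ℕ} (i j : Fin m) :
    deltaDir i j ↔ (i.1 < j.1 ∧ ¬(i.1 % 2 = 0 ∧ j.1 % 2 = 0)) ∨
      (j.1 < i.1 ∧ i.1 % 2 = 0 ∧ j.1 % 2 = 0) := by
  simp only [deltaDir, Fin.lt_def, Nat.even_iff]

lemma deltaDir_congr_right {m : ℕ} {a b c : Fin m} (hab : a.1 % 2 = b.1 % 2)
    (hc : (c < a ∧ c < b) ∨ (a < c ∧ b < c)) : deltaDir c a ↔ deltaDir c b := by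
  simp only [deltaDir_iff, Fin.lt_def] at hc ⊢
  omega

lemma deltaSum_adj_of_fst_ne {m : ℕ} {F : Fin m → Tournament} {x y : (deltaSum F).V}
    (h : x.1 ≠ y.1) : (deltaSum F).adj x y ↔ deltaDir x.1 y.1 := by
  refine ⟨?_, Or.inl⟩
  rintro (hd | ⟨i, u, v, -, rfl, rfl⟩)
  · exact hd
  · exact absurd rfl h

lemma deltaSum_adj_mk {m : ℕ} {F : Fin m → Tournament} {i : Fin m} (u v : (F i).V) :
    (deltaSum F).adj ⟨i, u⟩ ⟨i, v⟩ ↔ (F i).adj u v := by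
  refine ⟨?_, fun h => Or.inr ⟨i, u, v, h, rfl, rfl⟩⟩
  rintro (hd | ⟨k, a, b, hadj, h₁, h₂⟩)
  · exact absurd hd (deltaDir_irrefl i)
  · obtain ⟨rfl, h₁⟩ := Sigma.mk.inj_iff.mp h₁
    obtain rfl := eq_of_heq h₁
    obtain rfl := eq_of_heq (Sigma.mk.inj_iff.mp h₂).2
    exact hadj

lemma Contains.trans (h₁ : T.Contains S) (h₂ : S.Contains R) :
    T.Contains R := by
  obtain ⟨f, hf, hfadj⟩ := h₁
  obtain ⟨g, hg, hgadj⟩ := h₂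
  exact ⟨f ∘ g, hf.comp hg, fun u v => (hgadj u v).trans (hfadj (g u) (g v))⟩

lemma Iso.trans (h₁ : T.Iso S) (h₂ : S.Iso R) : T.Iso R := by
  obtain ⟨f, hf, hfadj⟩ := h₁
  obtain ⟨g, hg, hgadj⟩ := h₂
  exact ⟨f ∘ g, hf.comp hg, fun u v => (hgadj u v).trans (hfadj (g u) (g v))⟩

lemma Iso.symm (h : T.Iso S) : S.Iso T := by
  obtain ⟨f, hf, hadj⟩ := h
  let e := Equiv.ofBijective f hf
  refine ⟨e.symm, e.symm.bijective, fun u v => ?_⟩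
  rw [hadj, Equiv.ofBijective_apply_symm_apply f hf, Equiv.ofBijective_apply_symm_apply f hf]

lemma Iso.prime (h : T.Iso S) (hS : S.Prime) : T.Prime := by
  obtain ⟨f, hf, hadj⟩ := h
  rintro ⟨A, h₁, h₂, hA⟩
  have hcard := Set.ncard_preimage_of_injective_subset_range hf.1
    (hf.2.range_eq ▸ Set.subset_univ A)
  refine hS ⟨f ⁻¹' A, hcard ▸ h₁, ?_, ?_⟩
  · rwa [hcard, Nat.card_eq_of_bijective f hf]
  · rintro v hv ⟨⟨s₁, hs₁, h₁⟩, ⟨s₂, hs₂, h₂⟩⟩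
    exact hA (f v) hv
      ⟨⟨f s₁, hs₁, (hadj _ _).mp h₁⟩, ⟨f s₂, hs₂, (hadj _ _).mp h₂⟩⟩

lemma MixedOn.mono {v : T.V} {A S : Set T.V} (h : T.MixedOn v A) (hAS : A ⊆ S) :
    T.MixedOn v S :=
  ⟨h.1.imp fun _ hs => ⟨hAS hs.1, hs.2⟩, h.2.imp fun _ hs => ⟨hAS hs.1, hs.2⟩⟩

lemma mem_of_mixedOn {A S : Set T.V} (hS : ∀ v ∉ S, ¬ T.MixedOn v S) (hAS : A ⊆ S)
    {w : T.V} (hw : T.MixedOn w A) : w ∈ S :=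
  by_contra fun h => hS w h (hw.mono hAS)

lemma mixedOn_pair_of_adj {w a b : T.V}
    (h : (T.adj a w ∧ T.adj w b) ∨ (T.adj b w ∧ T.adj w a)) : T.MixedOn w {a, b} := by
  rcases h with ⟨haw, hwb⟩ | ⟨hbw, hwa⟩
  · exact ⟨⟨b, by simp, hwb⟩, ⟨a, by simp, haw⟩⟩
  · exact ⟨⟨a, by simp, hwa⟩, ⟨b, by simp, hbw⟩⟩

lemma Prime.exists_mixedOn (hT : T.Prime) {S : Set T.V} (h₁ : 1 < S.ncard)
    (h₂ : S.ncard < Nat.card T.V) : ∃ v ∉ S, T.MixedOn v S := by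
  by_contra! h
  exact hT ⟨S, h₁, h₂, h⟩

lemma Prime.mixedOn_compl_singleton (hT : T.Prime) (hcard : 3 ≤ Nat.card T.V) (v : T.V) :
    T.MixedOn v {v}ᶜ := by
  have hcompl := Set.ncard_add_ncard_compl ({v} : Set T.V)
  rw [Set.ncard_singleton] at hcompl
  obtain ⟨w, hw, hmixed⟩ := hT.exists_mixedOn (S := {v}ᶜ) (by omega) (by omega)
  obtain rfl : w = v := by simpa using hw
  exact hmixed

abbrev finDelta (m : ℕ) : Tournament where
  V := Fin m
  adj := deltaDir
  irrefl := deltaDir_irrefl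
  total _ _ h := deltaDir_total h
  asymm _ _ h := deltaDir_asymm h

lemma finDelta_exists_mixedOn_between {m : ℕ} {a b : Fin m} (hab : a.1 + 1 < b.1) :
    ∃ w, a < w ∧ w < b ∧ (finDelta m).MixedOn w {a, b} := by
  by_cases h : a.1 % 2 = 0 ∨ b.1 % 2 = 1
  · refine ⟨⟨a.1 + 1, by omega⟩, Fin.lt_def.mpr (by simp), Fin.lt_def.mpr (by simp; omega),
      mixedOn_pair_of_adj (Or.inl ?_)⟩
    simp only [deltaDir_iff]
    omega
  · refine ⟨⟨b.1 - 1, by omega⟩, Fin.lt_def.mpr (by simp; omega),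
      Fin.lt_def.mpr (by simp; omega),
      mixedOn_pair_of_adj (Or.inl ?_)⟩
    simp only [deltaDir_iff]
    omega

lemma finDelta_mixedOn_pair_succ {m : ℕ} {a b c : Fin m} (hab : b.1 = a.1 + 1) (hc : c.1 % 2 = 0)
    (hca : c ≠ a) (hcb : c ≠ b) : (finDelta m).MixedOn c {a, b} := by
  have := Fin.val_ne_of_ne hca
  have := Fin.val_ne_of_ne hcb
  apply mixedOn_pair_of_adj
  simp only [deltaDir_iff]
  omega

lemma finDelta_mixedOn_of_odd {m : ℕ} {a b c : Fin m} (hac : a < c) (hcb : c < b)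
    (hc : c.1 % 2 = 1) : (finDelta m).MixedOn c {a, b} := by
  rw [Fin.lt_def] at hac hcb
  apply mixedOn_pair_of_adj
  simp only [deltaDir_iff]
  omega

lemma finDelta_exists_succ_mem {m : ℕ} {S : Set (Fin m)}
    (hS : ∀ v ∉ S, ¬ (finDelta m).MixedOn v S) {a b : Fin m} (ha : a ∈ S) (hb : b ∈ S)
    (hab : a < b) : ∃ c ∈ S, ∃ d ∈ S, d.1 = c.1 + 1 := by
  induction b using WellFoundedLT.induction with
  | _ b ih =>
    by_cases hsucc : b.1 = a.1 + 1
    · exact ⟨a, ha, b, hb, hsucc⟩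
    obtain ⟨w, haw, hwb, hw⟩ := finDelta_exists_mixedOn_between (a := a) (b := b)
      (by rw [Fin.lt_def] at hab; omega)
    exact ih w hwb (mem_of_mixedOn hS (Set.pair_subset ha hb) hw) haw

lemma finDelta_prime {m : ℕ} (hm : m % 2 = 1) : (finDelta m).Prime := by
  rintro ⟨S, h₁, h₂, hS⟩
  obtain ⟨a, ha, b, hb, hab⟩ := (Set.one_lt_ncard (Set.toFinite S)).mp h₁
  obtain ⟨c, hc, d, hd, hcd⟩ : ∃ c ∈ S, ∃ d ∈ S, d.1 = c.1 + 1 := by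
    rcases lt_or_gt_of_ne (α := Fin m) hab with h | h
    exacts [finDelta_exists_succ_mem hS ha hb h, finDelta_exists_succ_mem hS hb ha h]
  have heven : ∀ v : Fin m, v.1 % 2 = 0 → v ∈ S := fun v hv => by
    by_cases hvc : v = c
    · exact hvc ▸ hc
    by_cases hvd : v = d
    · exact hvd ▸ hd
    exact mem_of_mixedOn hS (Set.pair_subset hc hd) (finDelta_mixedOn_pair_succ hcd hv hvc hvd)
  have hall : ∀ v : Fin m, v ∈ S := fun v => by
    rcases Nat.mod_two_eq_zero_or_one v.1 with hv | hv
    · exact heven v hv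
    have hfirst := heven ⟨0, by omega⟩ rfl
    have hlast := heven ⟨m - 1, by omega⟩ (by simp; omega)
    exact mem_of_mixedOn hS (Set.pair_subset hfirst hlast)
      (finDelta_mixedOn_of_odd (Fin.lt_def.mpr (by simp; omega))
        (Fin.lt_def.mpr (by simp; omega)) hv)
  exact h₂.ne (Set.eq_univ_of_forall hall ▸ Set.ncard_univ _)

lemma utour_adj_iff {n : ℕ} (x y : (Utour n).V) : (Utour n).adj x y ↔ deltaDir x.1 y.1 := by
  rcases x with ⟨i, ⟨⟩⟩
  rcases y with ⟨j, ⟨⟩⟩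
  by_cases hij : i = j
  · subst hij
    exact iff_of_false ((Utour n).irrefl _) (deltaDir_irrefl i)
  · exact deltaSum_adj_of_fst_ne hij

lemma finDelta_iso_utour {m n : ℕ} (h : m = 2 * n - 1) : (finDelta m).Iso (Utour n) := by
  subst h
  refine ⟨Sigma.fst, ⟨?_, fun i => ⟨⟨i, ()⟩, rfl⟩⟩, utour_adj_iff⟩
  rintro ⟨i, ⟨⟩⟩ ⟨j, ⟨⟩⟩ rfl
  rfl

lemma utour_prime {n : ℕ} (hn : 0 < n) : (Utour n).Prime :=
  (finDelta_iso_utour rfl).symm.prime (finDelta_prime (by omega))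

lemma finDelta_one_contains_oneTour : (finDelta 1).Contains oneTour :=
  ⟨fun _ => (0 : Fin 1), fun _ _ _ => rfl, fun _ _ => iff_of_false id (deltaDir_irrefl _)⟩

lemma contains_part_of_forall_fst_eq {m : ℕ} {F : Fin m → Tournament}
    {f : T.V → (deltaSum F).V} (hf : Injective f)
    (hadj : ∀ u v, T.adj u v ↔ (deltaSum F).adj (f u) (f v)) {i : Fin m}
    (hi : ∀ v, (f v).1 = i) : (F i).Contains T := by
  have hpart : ∀ v, ∃ x : (F i).V, f v = ⟨i, x⟩ := fun v => by
    have hv := hi v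
    rcases hfv : f v with ⟨j, x⟩
    rw [hfv] at hv
    subst hv
    exact ⟨x, rfl⟩
  choose g hg using hpart
  refine ⟨g, fun u v h => hf (by rw [hg, hg, h]), fun u v => ?_⟩
  rw [hadj, hg, hg, deltaSum_adj_mk]

lemma Prime.contains_part_or_finDelta {m : ℕ} {F : Fin m → Tournament}
    (hT : T.Prime) (hc : (deltaSum F).Contains T) :
    (∃ i, (F i).Contains T) ∨ (finDelta m).Contains T := by
  obtain ⟨f, hf, hadj⟩ := hc
  by_cases hinj : Injective fun v => (f v).1
  · refine Or.inr ⟨_, hinj, fun u v => ?_⟩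
    rw [hadj]
    by_cases huv : u = v
    · subst huv
      exact iff_of_false ((deltaSum F).irrefl _) (deltaDir_irrefl _)
    · exact deltaSum_adj_of_fst_ne (hinj.ne huv)
  obtain ⟨u, v, huv, hne⟩ : ∃ u v, (f u).1 = (f v).1 ∧ u ≠ v := by
    simpa [Injective] using hinj
  refine Or.inl ⟨(f u).1, contains_part_of_forall_fst_eq hf hadj fun w => ?_⟩
  by_contra hw
  refine hT ⟨{w | (f w).1 = (f u).1}, ?_, Set.ncard_lt_card fun h => hw ?_, ?_⟩
  · exact (Set.one_lt_ncard (Set.toFinite _)).mpr ⟨u, rfl, v, huv.symm, hne⟩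
  · exact (Set.eq_univ_iff_forall.mp h w : _)
  · rintro z hz ⟨⟨s₁, hs₁, h₁⟩, ⟨s₂, hs₂, h₂⟩⟩
    rw [hadj, deltaSum_adj_of_fst_ne (hs₁ ▸ hz), hs₁] at h₁
    rw [hadj, deltaSum_adj_of_fst_ne (hs₂ ▸ Ne.symm hz), hs₂] at h₂
    exact deltaDir_asymm h₁ h₂

lemma Prime.finDelta_contains_of_atour_contains (hT : T.Prime) :
    ∀ {m : ℕ}, (Atour m).Contains T → ∃ M, (finDelta M).Contains T
  | 0, hc | 1, hc => ⟨1, finDelta_one_contains_oneTour.trans hc⟩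
  | m + 2, hc => by
    rcases hT.contains_part_or_finDelta hc with ⟨i, hi⟩ | h
    · split_ifs at hi
      · exact ⟨1, finDelta_one_contains_oneTour.trans hi⟩
      · exact hT.finDelta_contains_of_atour_contains hi
    · exact ⟨_, h⟩

abbrev finDeltaComap {s m : ℕ} (e : Fin s ↪o Fin m) : Tournament where
  V := Fin s
  adj a b := deltaDir (e a) (e b)
  irrefl a := deltaDir_irrefl (e a)
  total _ _ h := deltaDir_total (e.injective.ne h)
  asymm _ _ h := deltaDir_asymm h

lemma iso_finDeltaComap_of_finDelta_contains {m : ℕ} (hc : (finDelta m).Contains T) :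
    ∃ e : Fin (Nat.card T.V) ↪o Fin m, T.Iso (finDeltaComap e) := by
  obtain ⟨pos, hpos, hadj⟩ := hc
  have hJ : (Finset.univ.image pos).card = Nat.card T.V := by
    rw [Finset.card_image_of_injective _ hpos, Finset.card_univ, Nat.card_eq_fintype_card]
  set e := (Finset.univ.image pos).orderEmbOfFin hJ
  have hσ : ∀ k, ∃ v, pos v = e k := fun k => by
    obtain ⟨v, -, hv⟩ := Finset.mem_image.mp ((Finset.univ.image pos).orderEmbOfFin_mem hJ k)
    exact ⟨v, hv⟩
  choose σ hσ using hσ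
  have hσinj : Injective σ := fun a b h => e.injective (by rw [← hσ, ← hσ, h])
  refine ⟨e, σ, (Fintype.bijective_iff_injective_and_card σ).mpr ⟨hσinj, ?_⟩,
    fun a b => ?_⟩
  · simp [Nat.card_eq_fintype_card]
  · rw [hadj, hσ, hσ]

section Comap

variable {s m : ℕ} {e : Fin s ↪o Fin m}

lemma card_finDeltaComap : Nat.card (finDeltaComap e).V = s := Nat.card_fin s

lemma finDeltaComap_mod_two_of_val_eq_zero (hp : (finDeltaComap e).Prime) (hs : 3 ≤ s)
    {a : Fin s} (ha : a.1 = 0) : (e a).1 % 2 = 0 := by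
  obtain ⟨-, j, hj, hja⟩ := hp.mixedOn_compl_singleton (card_finDeltaComap.symm ▸ hs) a
  have hlt : e a < e j := e.lt_iff_lt.mpr (Fin.lt_def.mpr
    (by have := Fin.val_ne_of_ne (Set.mem_compl_singleton_iff.mp hj); omega))
  change deltaDir (e j) (e a) at hja
  rw [deltaDir_iff] at hja
  rw [Fin.lt_def] at hlt
  omega

lemma finDeltaComap_mod_two_of_val_add_one_eq (hp : (finDeltaComap e).Prime) (hs : 3 ≤ s)
    {a : Fin s} (ha : a.1 + 1 = s) : (e a).1 % 2 = 0 := by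
  obtain ⟨⟨j, hj, haj⟩, -⟩ := hp.mixedOn_compl_singleton (card_finDeltaComap.symm ▸ hs) a
  have hlt : e j < e a := e.lt_iff_lt.mpr (Fin.lt_def.mpr
    (by have := Fin.val_ne_of_ne (Set.mem_compl_singleton_iff.mp hj); omega))
  change deltaDir (e a) (e j) at haj
  rw [deltaDir_iff] at haj
  rw [Fin.lt_def] at hlt
  omega

lemma finDeltaComap_mod_two_ne_of_succ (hp : (finDeltaComap e).Prime) (hs : 3 ≤ s)
    {a b : Fin s} (hab : b.1 = a.1 + 1) : (e a).1 % 2 ≠ (e b).1 % 2 := by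
  intro hpar
  have hne : a ≠ b := fun h => by rw [h] at hab; omega
  obtain ⟨w, hw, ⟨x₁, hx₁, h₁⟩, ⟨x₂, hx₂, h₂⟩⟩ :=
    hp.exists_mixedOn (S := {a, b})
    (by rw [Set.ncard_pair hne]; omega) (by rw [Set.ncard_pair hne, card_finDeltaComap]; omega)
  have hout : (e w < e a ∧ e w < e b) ∨ (e a < e w ∧ e b < e w) := by
    simp only [Set.mem_insert_iff, Set.mem_singleton_iff, not_or, Fin.ext_iff] at hw
    simp only [e.lt_iff_lt, Fin.lt_def]
    omega
  have hcongr :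
      ∀ x ∈ ({a, b} : Set (Fin s)), deltaDir (e w) (e x) ↔ deltaDir (e w) (e a) := by
    rintro x (rfl | rfl)
    · rfl
    · exact (deltaDir_congr_right hpar hout).symm
  exact deltaDir_asymm ((hcongr x₂ hx₂).mpr ((hcongr x₁ hx₁).mp h₁)) h₂

lemma finDeltaComap_mod_two (hp : (finDeltaComap e).Prime) (hs : 3 ≤ s) (a : Fin s) :
    (e a).1 % 2 = a.1 % 2 := by
  obtain ⟨k, hk⟩ := a
  induction k with
  | zero => exact finDeltaComap_mod_two_of_val_eq_zero hp hs rfl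
  | succ k ih =>
    have := finDeltaComap_mod_two_ne_of_succ hp hs
      (a := ⟨k, by omega⟩) (b := ⟨k + 1, hk⟩) rfl
    have := ih (by omega)
    dsimp only at *
    omega

lemma finDeltaComap_odd (hp : (finDeltaComap e).Prime) (hs : 3 ≤ s) : s % 2 = 1 := by
  have hlast := finDeltaComap_mod_two_of_val_add_one_eq hp hs (a := ⟨s - 1, by omega⟩)
    (by simp only; omega)
  rw [finDeltaComap_mod_two hp hs] at hlast
  simp only at hlast
  omega

lemma finDeltaComap_iso_finDelta (hpar : ∀ a, (e a).1 % 2 = a.1 % 2) :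
    (finDeltaComap e).Iso (finDelta s) := by
  refine ⟨id, bijective_id, fun a b => ?_⟩
  change deltaDir a b ↔ deltaDir (e a) (e b)
  have hab := e.lt_iff_lt (a := a) (b := b)
  have hba := e.lt_iff_lt (a := b) (b := a)
  simp only [deltaDir_iff, Fin.lt_def, hpar] at hab hba ⊢
  omega

end Comap

lemma Prime.iso_utour_of_finDelta_contains {m : ℕ} (hT : T.Prime)
    (hcard : 3 ≤ Nat.card T.V) (hc : (finDelta m).Contains T) :
    ∃ n, 2 ≤ n ∧ T.Iso (Utour n) := by
  obtain ⟨e, he⟩ := iso_finDeltaComap_of_finDelta_contains hc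
  have hp : (finDeltaComap e).Prime := he.symm.prime hT
  have hodd := finDeltaComap_odd hp hcard
  refine ⟨(Nat.card T.V + 1) / 2, by omega, he.trans ?_⟩
  exact (finDeltaComap_iso_finDelta (finDeltaComap_mod_two hp hcard)).trans
    (finDelta_iso_utour (by omega))

end Tournament

open Tournament in
/-- A tournament in `𝒜` with at least three vertices is prime iff
it is isomorphic to `U_n` for some `n ≥ 2`. -/
theorem prime_iff_iso_Utour (T : Tournament) (hT : T ∈ classA)
    (hcard : 3 ≤ Nat.card T.V) :
    T.Prime ↔ ∃ n : ℕ, 2 ≤ n ∧ T.Iso (Utour n) := by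
  constructor
  · intro hp
    obtain ⟨m, -, hc⟩ := hT
    obtain ⟨M, hM⟩ := hp.finDelta_contains_of_atour_contains hc
    exact hp.iso_utour_of_finDelta_contains hcard hM
  · rintro ⟨n, hn, hiso⟩
    exact hiso.prime (utour_prime (by omega))
end

section
/- Let T be a forest tournament with at least two vertices and let σ be a forest ordering of V(T). Then for every vertex v of T, the tournament T∖v obtained by deleting v is a forest tournament, and the ordering σ with v removed is a forest ordering of T∖v. -/
open scoped List

theorem List.map_sublist_map_iff_of_injective {α β : Type*} {f : α → β}
    (hf : Function.Injective f) {l₁ l₂ : List α} : l₁.map f <+ l₂.map f ↔ l₁ <+ l₂ := by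
  refine ⟨fun h => ?_, fun h => h.map f⟩
  obtain ⟨l', hl', hmap⟩ := List.sublist_map_iff.mp h
  rwa [List.map_injective_iff.mpr hf hmap]

namespace Tournament

variable {S T : Tournament}

theorem BackAdj.mono {l l' : List T.V} (hs : l' <+ l) {u v : T.V} (h : T.BackAdj l' u v) :
    T.BackAdj l u v :=
  h.imp (And.imp_right (·.trans hs)) (And.imp_right (·.trans hs))

theorem backAdj_map_iff {f : S.V → T.V} (hf : Function.Injective f)
    (hadj : ∀ u v, S.adj u v ↔ T.adj (f u) (f v)) (L : List S.V) (u v : S.V) :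
    T.BackAdj (L.map f) (f u) (f v) ↔ S.BackAdj L u v := by
  have hpair : ∀ x y : S.V, [f x, f y] <+ L.map f ↔ [x, y] <+ L := fun x y =>
    List.map_sublist_map_iff_of_injective hf (l₁ := [x, y])
  simp only [BackAdj, hadj, hpair]

theorem IsForestOrdering.sublist {l l' : List T.V} (h : IsForestOrdering T l) (hs : l' <+ l)
    (hne : l' ≠ []) : IsForestOrdering T l' := by
  induction h generalizing l' with
  | single v =>
    obtain rfl | rfl := List.sublist_singleton.mp hs
    exacts [absurd rfl hne, .single v]
  | split l₁ l₂ _ _ hsep _ _ ih₁ ih₂ =>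
    obtain ⟨a, b, rfl, ha, hb⟩ := List.sublist_append_iff.mp hs
    obtain rfl | hA := eq_or_ne a []
    · simpa using ih₂ hb (by simpa using hne)
    obtain rfl | hB := eq_or_ne b []
    · simpa using ih₁ ha (by simpa using hne)
    have hback {x y : T.V} : T.BackAdj (a ++ b) x y → T.BackAdj (l₁ ++ l₂) x y :=
      BackAdj.mono (ha.append hb)
    refine .split a b hA hB ?_ (ih₁ ha hA) (ih₂ hb hB)
    intro x hx y hy z hz w hw hxy hzw hxz
    exact hsep x (ha.subset hx) y (hb.subset hy) z (ha.subset hz) w (hb.subset hw)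
      (hback hxy) (hback hzw) (Relation.ReflTransGen.mono (fun _ _ => hback) _ _ hxz)

theorem IsForestOrdering.of_map {f : S.V → T.V} (hf : Function.Injective f)
    (hadj : ∀ u v, S.adj u v ↔ T.adj (f u) (f v)) {L : List S.V}
    (h : IsForestOrdering T (L.map f)) : IsForestOrdering S L := by
  generalize hm : L.map f = m at h
  induction h generalizing L with
  | single v =>
    obtain ⟨x, rfl, -⟩ := List.map_eq_singleton_iff.mp hm
    exact .single x
  | split l₁ l₂ h₁ h₂ hsep _ _ ih₁ ih₂ =>
    obtain ⟨L₁, L₂, rfl, rfl, rfl⟩ := List.map_eq_append_iff.mp hm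
    have hback {x y : S.V} :
        S.BackAdj (L₁ ++ L₂) x y → T.BackAdj (L₁.map f ++ L₂.map f) (f x) (f y) := by
      rw [← List.map_append]
      exact (backAdj_map_iff hf hadj _ x y).mpr
    refine .split L₁ L₂ (by rintro rfl; exact h₁ rfl) (by rintro rfl; exact h₂ rfl) ?_
      (ih₁ rfl) (ih₂ rfl)
    intro x hx y hy z hz w hw hxy hzw hxz
    have := hsep (f x) (List.mem_map_of_mem hx) (f y) (List.mem_map_of_mem hy)
      (f z) (List.mem_map_of_mem hz) (f w) (List.mem_map_of_mem hw) (hback hxy) (hback hzw)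
      (Relation.ReflTransGen.lift f (fun _ _ => hback) _ _ hxz)
    exact ⟨hf this.1, hf this.2⟩

theorem isForestTournament_induce {s : Set T.V} {l : List T.V} (hnd : l.Nodup)
    (hmem : ∀ u, u ∈ l ↔ u ∈ s) (hfo : IsForestOrdering T l) :
    (T.induce s).IsForestTournament := by
  let L : List s := l.attachWith (· ∈ s) fun u hu => (hmem u).mp hu
  let ι : (T.induce s).V → T.V := Subtype.val
  have hL : L.map ι = l := List.attachWith_map_subtype_val _
  refine ⟨L, .of_map ι (by rwa [hL]), fun w : s => ?_, ?_⟩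
  · exact (List.mem_attachWith _ w).mpr ((hmem w).mpr w.2)
  · exact .of_map (f := ι) Subtype.val_injective (fun _ _ => Iff.rfl) (by rwa [hL])

end Tournament

open Tournament in
/-- Deleting a vertex from a forest tournament (with at least two
vertices) yields a forest tournament, and the forest ordering with the vertex
removed is a forest ordering of the deletion. -/
theorem forestOrdering_delete_vertex (T : Tournament) (l : List T.V)
    (hnd : l.Nodup) (hcov : ∀ v, v ∈ l) (hlen : 2 ≤ l.length)
    (hfo : IsForestOrdering T l) (v : T.V) :
    (T.induce {u | u ≠ v}).IsForestTournament ∧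
      ∀ l₁ l₂ : List T.V, l = l₁ ++ v :: l₂ → IsForestOrdering T (l₁ ++ l₂) := by
  have hdelete : ∀ l₁ l₂ : List T.V, l = l₁ ++ v :: l₂ → IsForestOrdering T (l₁ ++ l₂) := by
    rintro l₁ l₂ rfl
    refine hfo.sublist ((l₂.sublist_cons_self v).append_left l₁) fun hnil => ?_
    simp [List.append_eq_nil_iff.mp hnil] at hlen
  obtain ⟨l₁, l₂, hl⟩ := List.append_of_mem (hcov v)
  have hnd' : (v :: (l₁ ++ l₂)).Nodup := List.nodup_middle.mp (hl ▸ hnd)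
  have hmem (u : T.V) : u ∈ l₁ ++ l₂ ↔ u ≠ v := by
    refine ⟨fun hu huv => (List.nodup_cons.mp hnd').1 (huv ▸ hu), fun huv => ?_⟩
    exact (List.mem_cons.mp (List.perm_middle.mem_iff.mp (hl ▸ hcov u))).resolve_left huv
  exact ⟨isForestTournament_induce hnd'.of_cons hmem (hdelete l₁ l₂ hl), hdelete⟩
end

section
/- Every forest tournament has chromatic number at most two, i.e., its vertex set can be partitioned into two transitive sets. -/
/-!
Colour the backedge graph of a forest ordering with two colours, following its recursive
splitting. When the two halves are joined, every component of the backedge graph contains at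
most one edge between them, so flipping the colours on the right-hand part of each component
whose crossing edge is monochromatic yields a proper colouring. A colour class then spans no
backward edge, so the ordering lists it as a transitive tournament.
-/

namespace List

variable {α : Type*} {l l₁ l₂ : List α}

theorem Sublist.of_append_left (h : l <+ l₁ ++ l₂) (hl : ∀ x ∈ l, x ∉ l₂) : l <+ l₁ := by
  obtain ⟨r₁, r₂, rfl, h₁, h₂⟩ := sublist_append_iff.mp h
  obtain rfl : r₂ = [] := eq_nil_iff_forall_not_mem.mpr fun x hx =>
    hl x (mem_append_right _ hx) (h₂.subset hx)
  simpa using h₁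

theorem Sublist.of_append_right (h : l <+ l₁ ++ l₂) (hl : ∀ x ∈ l, x ∉ l₁) : l <+ l₂ := by
  obtain ⟨r₁, r₂, rfl, h₁, h₂⟩ := sublist_append_iff.mp h
  obtain rfl : r₁ = [] := eq_nil_iff_forall_not_mem.mpr fun x hx =>
    hl x (mem_append_left _ hx) (h₁.subset hx)
  simpa using h₂

end List

namespace SimpleGraph

variable {α : Type*} (G : SimpleGraph α)

theorem exists_bool_coloring_union {A B : Set α} {c₁ c₂ : α → Bool}
    (h₁ : ∀ u ∈ A, ∀ v ∈ A, G.Adj u v → c₁ u ≠ c₁ v)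
    (h₂ : ∀ u ∈ B, ∀ v ∈ B, G.Adj u v → c₂ u ≠ c₂ v)
    (hsep : ∀ a ∈ A, ∀ b ∈ B, ∀ a' ∈ A, ∀ b' ∈ B,
      G.Adj a b → G.Adj a' b' → G.Reachable a a' → a = a' ∧ b = b') :
    ∃ c : α → Bool, ∀ u ∈ A ∪ B, ∀ v ∈ A ∪ B, G.Adj u v → c u ≠ c v := by
  classical
  -- `P v`: the component of `v` contains a monochromatic edge from `A` to `B`.
  let P : α → Prop := fun v =>
    ∃ a ∈ A, ∃ b ∈ B, G.Adj a b ∧ G.Reachable b v ∧ c₁ a = c₂ b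
  have hP_reachable {u v : α} (huv : G.Reachable u v) : P u ↔ P v :=
    ⟨fun ⟨a, ha, b, hb, hab, hbu, hc⟩ => ⟨a, ha, b, hb, hab, hbu.trans huv, hc⟩,
      fun ⟨a, ha, b, hb, hab, hbv, hc⟩ => ⟨a, ha, b, hb, hab, hbv.trans huv.symm, hc⟩⟩
  have hP_cross {u v : α} (hu : u ∈ A) (hv : v ∈ B) (huv : G.Adj u v) : P v ↔ c₁ u = c₂ v := by
    refine ⟨fun ⟨a, ha, b, hb, hab, hbv, hc⟩ => ?_, fun hc => ⟨u, hu, v, hv, huv, .rfl, hc⟩⟩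
    obtain ⟨rfl, rfl⟩ := hsep a ha b hb u hu v hv hab huv
      (hab.reachable.trans (hbv.trans huv.symm.reachable))
    exact hc
  let c : α → Bool := fun v => if v ∈ A then c₁ v else if P v then !c₂ v else c₂ v
  have cross {u v : α} (hu : u ∈ A) (hv : v ∈ B) (hvA : v ∉ A) (huv : G.Adj u v) :
      c u ≠ c v := by
    by_cases hc : c₁ u = c₂ v <;> simp [c, hu, hvA, hP_cross hu hv huv, hc]
  refine ⟨c, fun u hu v hv huv => ?_⟩
  by_cases huA : u ∈ A <;> by_cases hvA : v ∈ A
  · simpa [c, huA, hvA] using h₁ u huA v hvA huv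
  · exact cross huA (hv.resolve_left hvA) hvA huv
  · exact (cross hvA (hu.resolve_left huA) huA huv.symm).symm
  · have hne := h₂ u (hu.resolve_left huA) v (hv.resolve_left hvA) huv
    by_cases hPu : P u <;> simp [c, huA, hvA, hPu, ← hP_reachable huv.reachable, hne]

end SimpleGraph

namespace Tournament

variable {T : Tournament} {l l₁ l₂ : List T.V} {u v : T.V}

theorem BackAdj.of_append_left (h : T.BackAdj (l₁ ++ l₂) u v) (hu : u ∉ l₂) (hv : v ∉ l₂) :
    T.BackAdj l₁ u v := by
  rcases h with ⟨huv, hs⟩ | ⟨hvu, hs⟩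
  · exact .inl ⟨huv, hs.of_append_left (by simp [hu, hv])⟩
  · exact .inr ⟨hvu, hs.of_append_left (by simp [hu, hv])⟩

theorem BackAdj.of_append_right (h : T.BackAdj (l₁ ++ l₂) u v) (hu : u ∉ l₁) (hv : v ∉ l₁) :
    T.BackAdj l₂ u v := by
  rcases h with ⟨huv, hs⟩ | ⟨hvu, hs⟩
  · exact .inl ⟨huv, hs.of_append_right (by simp [hu, hv])⟩
  · exact .inr ⟨hvu, hs.of_append_right (by simp [hu, hv])⟩

theorem IsForestOrdering.exists_bool_coloring (hl : T.IsForestOrdering l) (hnd : l.Nodup) :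
    ∃ c : T.V → Bool, ∀ u ∈ l, ∀ v ∈ l, T.BackAdj l u v → c u ≠ c v := by
  induction hl with
  | single w =>
    refine ⟨fun _ => true, fun u hu v hv huv => absurd ?_ ((T.backGraph [w]).ne_of_adj huv)⟩
    simp_all
  | split l₁ l₂ _ _ hsep _ _ ih₁ ih₂ =>
    obtain ⟨hnd₁, hnd₂, hdisj⟩ := List.nodup_append.mp hnd
    have hnot₂ {x : T.V} (hx : x ∈ l₁) : x ∉ l₂ := fun hx' => hdisj x hx x hx' rfl
    have hnot₁ {x : T.V} (hx : x ∈ l₂) : x ∉ l₁ := fun hx' => hnot₂ hx' hx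
    obtain ⟨c₁, hc₁⟩ := ih₁ hnd₁
    obtain ⟨c₂, hc₂⟩ := ih₂ hnd₂
    obtain ⟨c, hc⟩ := (T.backGraph (l₁ ++ l₂)).exists_bool_coloring_union
      (A := {x | x ∈ l₁}) (B := {x | x ∈ l₂})
      (fun u hu v hv huv => hc₁ u hu v hv (huv.of_append_left (hnot₂ hu) (hnot₂ hv)))
      (fun u hu v hv huv => hc₂ u hu v hv (huv.of_append_right (hnot₁ hu) (hnot₁ hv)))
      (fun a ha b hb a' ha' b' hb' hab hab' haa' =>
        hsep a ha b hb a' ha' b' hb' hab hab'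
          ((SimpleGraph.reachable_iff_reflTransGen a a').mp haa'))
    exact ⟨c, fun u hu v hv => hc u (List.mem_append.mp hu) v (List.mem_append.mp hv)⟩

theorem isTransSet_of_pairwise_adj (h : l.Pairwise T.adj) : T.IsTransSet {v | v ∈ l} := by
  induction l with
  | nil => simp [IsTransSet]
  | cons x t ih =>
    obtain ⟨hx, ht⟩ := List.pairwise_cons.mp h
    intro a ha b hb c hc hab hbc
    simp only [Set.mem_ofPred_eq, List.mem_cons] at ha hb hc
    rcases ha with rfl | ha
    · rcases hc with rfl | hc
      · exact absurd hbc (T.asymm _ _ hab)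
      · exact hx c hc
    rcases hb with rfl | hb
    · exact absurd hab (T.asymm _ _ (hx a ha))
    rcases hc with rfl | hc
    · exact absurd hbc (T.asymm _ _ (hx b hb))
    · exact ih ht a ha b hb c hc hab hbc

theorem isTransSet_of_forall_not_backAdj (hnd : l.Nodup) {S : Set T.V} (hS : ∀ v ∈ S, v ∈ l)
    (h : ∀ u ∈ S, ∀ v ∈ S, ¬ T.BackAdj l u v) : T.IsTransSet S := by
  classical
  have hfilter (x : T.V) : x ∈ l.filter (· ∈ S) ↔ x ∈ S := by simpa using hS x
  have hpw : (l.filter (· ∈ S)).Pairwise T.adj := by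
    refine List.pairwise_iff_forall_sublist.mpr fun {a b} hab => ?_
    have ha : a ∈ S := (hfilter a).mp (hab.subset (by simp))
    have hb : b ∈ S := (hfilter b).mp (hab.subset (by simp))
    have hne : a ≠ b := by simpa using hab.nodup (hnd.filter _)
    exact (T.total a b hne).resolve_right fun hba =>
      h b hb a ha (.inl ⟨hba, hab.trans List.filter_sublist⟩)
  exact Set.ext hfilter ▸ isTransSet_of_pairwise_adj hpw

end Tournament

open Tournament in
/-- Every forest tournament has chromatic number at most two. -/
theorem forest_chromNum_le_two (T : Tournament) (h : T.IsForestTournament) :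
    T.chromNum ≤ 2 := by
  obtain ⟨l, hnd, hmem, hfo⟩ := h
  obtain ⟨c, hc⟩ := hfo.exists_bool_coloring hnd
  refine Nat.sInf_le ⟨fun v => finTwoEquiv.symm (c v), fun i => ?_⟩
  refine isTransSet_of_forall_not_backAdj hnd (fun v _ => hmem v) fun u hu v hv huv => ?_
  exact hc u (hmem u) v (hmem v) huv (finTwoEquiv.symm.injective (hu.trans hv.symm))
end

section
/- Let T be a tournament. Then T belongs to 𝒞_{(r,s)} for every pair of positive integers r and s if and only if there exists an incomparable vertex ordering of T. -/
/-!
Two distinct edges of a graph in the same connected component lie on a common path: join them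
by a shortest walk between their endpoint sets and extend it by both edges. Hence, once `s` is at
least the number of vertices, `(r,s)`-incomparability of `φ` is exactly `r`-incomparability, and
`T ∈ 𝒞_{(r,s)}` for all `r, s` gives an `r`-incomparable `φ_r` for every `r`. Only finitely many
orderings `σ_{φ_r}` exist, so one of them occurs for arbitrarily large `r`; since
`r`-incomparability implies `r'`-incomparability for `r' ≤ r`, that ordering is incomparable.
-/

namespace SimpleGraph

variable {V : Type*} {G : SimpleGraph V}

theorem Walk.reachable_of_mem_support {u v x y : V} (p : G.Walk u v) (hx : x ∈ p.support)
    (hy : y ∈ p.support) : G.Reachable x y := by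
  classical
  exact (p.takeUntil x hx).reachable.symm.trans (p.takeUntil y hy).reachable

theorem Walk.notMem_support_of_forall_length_le {s : Set V} {a b c : V} {p : G.Walk a b}
    (hmin : ∀ x ∈ s, ∀ q : G.Walk x b, p.length ≤ q.length) (hc : c ∈ s) (hca : c ≠ a) :
    c ∉ p.support := by
  classical
  intro hcp
  have hsplit : (p.takeUntil c hcp).length + (p.dropUntil c hcp).length = p.length := by
    rw [← Walk.length_append, Walk.take_spec]
  have htake : (p.takeUntil c hcp).length ≠ 0 := fun h0 => hca (Walk.eq_of_length_eq_zero h0).symm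
  have := hmin c hc (p.dropUntil c hcp)
  omega

theorem exists_isPath_mem_edges_of_reachable {e f : Sym2 V} (he : e ∈ G.edgeSet)
    (hf : f ∈ G.edgeSet) (hef : e ≠ f) {x y : V} (hx : x ∈ e) (hy : y ∈ f)
    (hxy : G.Reachable x y) :
    ∃ (a b : V) (p : G.Walk a b), p.IsPath ∧ e ∈ p.edges ∧ f ∈ p.edges := by
  classical
  have hex : ∃ n, ∃ a ∈ e, ∃ b ∈ f, ∃ q : G.Walk a b, q.length = n :=
    ⟨_, x, hx, y, hy, hxy.some, rfl⟩
  obtain ⟨a, ha, b, hb, q, hq⟩ := Nat.find_spec hex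
  obtain ⟨p, hp, hpq⟩ : ∃ p : G.Walk a b, p.IsPath ∧ p.length ≤ q.length :=
    ⟨q.bypass, q.bypass_isPath, q.length_bypass_le_length⟩
  have hmin : ∀ a' ∈ e, ∀ b' ∈ f, ∀ q' : G.Walk a' b', p.length ≤ q'.length :=
    fun a' ha' b' hb' q' => (hpq.trans hq.le).trans (Nat.find_min' hex ⟨a', ha', b', hb', q', rfl⟩)
  set a' := Sym2.Mem.other ha
  set b' := Sym2.Mem.other hb
  have hae : s(a, a') = e := Sym2.other_spec ha
  have hbf : s(b, b') = f := Sym2.other_spec hb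
  have haa' : G.Adj a' a := (G.mem_edgeSet.mp (hae ▸ he)).symm
  have hbb' : G.Adj b b' := G.mem_edgeSet.mp (hbf ▸ hf)
  have ha'p : a' ∉ p.support :=
    Walk.notMem_support_of_forall_length_le (s := {c | c ∈ e}) (fun c hc q' => hmin c hc b hb q')
      (Sym2.other_mem ha) (G.edge_other_ne he ha)
  have hb'p : b' ∉ p.support := by
    have hmin' : ∀ c ∈ {c | c ∈ f}, ∀ q' : G.Walk c a, p.reverse.length ≤ q'.length :=
      fun c hc q' => by simpa using hmin a ha c hc q'.reverse
    have := Walk.notMem_support_of_forall_length_le hmin' (Sym2.other_mem hb) (G.edge_other_ne hf hb)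
    rwa [Walk.support_reverse, List.mem_reverse] at this
  have ha'b' : a' ≠ b' := by
    intro h
    have hp0 : p.length = 0 :=
      Nat.le_zero.mp (hmin a' (Sym2.other_mem ha) a' (h ▸ Sym2.other_mem hb) Walk.nil)
    apply hef
    rw [← hae, ← hbf, Walk.eq_of_length_eq_zero hp0, h]
  refine ⟨a', b', .cons haa' (p.concat hbb'), ?_, ?_, ?_⟩
  · refine (hp.concat hb'p hbb').cons ?_
    simp [Walk.support_concat, ha'p, ha'b']
  · simp [← hae, Sym2.eq_swap]
  · simp [Walk.edges_concat, ← hbf]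

end SimpleGraph

theorem List.exists_nodup_pairwise_lt_of_injective {α β : Type*} [Fintype α] [LinearOrder β]
    {φ : α → β} (hφ : Function.Injective φ) :
    ∃ l : List α, l.Nodup ∧ (∀ a, a ∈ l) ∧ l.Pairwise (fun a b => φ a < φ b) := by
  set l := Finset.univ.toList.mergeSort (fun a b => φ a ≤ φ b)
  have hnodup : l.Nodup := List.nodup_mergeSort.mpr (Finset.nodup_toList _)
  have hle : l.Pairwise (fun a b => φ a ≤ φ b) := by
    simpa using List.pairwise_mergeSort (le := fun a b => φ a ≤ φ b)
      (fun _ _ _ h₁ h₂ => by simp only [decide_eq_true_eq] at *; exact h₁.trans h₂)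
      (fun a b => by simpa using le_total (φ a) (φ b)) _
  exact ⟨l, hnodup, fun a => by simp [l], (hle.and hnodup).imp fun h => lt_of_le_of_ne h.1
    (hφ.ne h.2)⟩

open SimpleGraph

namespace Tournament

variable {T : Tournament} {φ : T.V → ℕ} {r s : ℕ}

theorem RIncomp.mono {r' : ℕ} (h : RIncomp T φ r') (hle : r ≤ r') : RIncomp T φ r :=
  ⟨h.1, h.2.1, fun e he f hf hef hreach => (h.2.2 e he f hf hef hreach).imp
    (lt_of_le_of_lt (Nat.mul_le_mul_right _ hle)) (lt_of_le_of_lt (Nat.mul_le_mul_right _ hle))⟩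

theorem RIncomp.not_comparable (h : RIncomp T φ r) {e f : Sym2 T.V}
    (he : e ∈ (T.backGraphPhi φ).edgeSet) (hf : f ∈ (T.backGraphPhi φ).edgeSet) :
    ¬ Comparable T φ r s e f := by
  rintro ⟨hef, ⟨a, b, p, -, -, hep, hfp⟩, hle₁, hle₂⟩
  have hreach := p.reachable_of_mem_support (p.mem_support_of_mem_edges hep e.out_fst_mem)
    (p.mem_support_of_mem_edges hfp f.out_fst_mem)
  rcases h.2.2 e he f hf hef ⟨_, _, e.out_fst_mem, f.out_fst_mem, hreach⟩ with hlt | hlt <;> omega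

theorem mem_classC_of_rIncomp (h : RIncomp T φ r) : T ∈ classC r s :=
  ⟨φ, h.1, h.2.1, fun _ he _ hf => h.not_comparable he hf⟩

theorem rIncomp_of_forall_not_comparable (hpos : ∀ v, 0 < φ v) (hinj : Function.Injective φ)
    (hs : Fintype.card T.V ≤ s)
    (hC : ∀ e ∈ (T.backGraphPhi φ).edgeSet, ∀ f ∈ (T.backGraphPhi φ).edgeSet,
      ¬ Comparable T φ r s e f) :
    RIncomp T φ r := by
  refine ⟨hpos, hinj, fun e he f hf hef ⟨a, b, ha, hb, hab⟩ => ?_⟩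
  obtain ⟨x, y, p, hp, hep, hfp⟩ := exists_isPath_mem_edges_of_reachable he hf hef ha hb hab
  by_contra! hle
  exact hC e he f hf ⟨hef, ⟨x, y, p, hp, hp.length_lt.le.trans hs, hep, hfp⟩, hle⟩

theorem exists_rIncomp_of_mem_classC (hT : T ∈ classC r s) (hs : Fintype.card T.V ≤ s) :
    ∃ φ, RIncomp T φ r :=
  let ⟨φ, hpos, hinj, hC⟩ := hT
  ⟨φ, rIncomp_of_forall_not_comparable hpos hinj hs hC⟩

theorem exists_incompOrdering_of_forall_rIncomp (h : ∀ r, ∃ φ : T.V → ℕ, RIncomp T φ r) :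
    ∃ l : List T.V, IsOrdering T l ∧ IsIncompOrdering T l := by
  choose φ hφ using h
  obtain ⟨R, hR⟩ := Finite.exists_infinite_fiber fun r u v => φ r u < φ r v
  have hinf : {r | (fun u v => φ r u < φ r v) = R}.Infinite := Set.infinite_coe_iff.mp hR
  obtain ⟨r₀, hr₀⟩ := hinf.nonempty
  obtain ⟨l, hnodup, hmem, hsorted⟩ := List.exists_nodup_pairwise_lt_of_injective (hφ r₀).2.1
  refine ⟨l, ⟨hnodup, hmem⟩, fun r _ => ?_⟩
  obtain ⟨r', hr', hrr'⟩ := hinf.exists_gt r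
  have hsame : ∀ u v, φ r₀ u < φ r₀ v ↔ φ r' u < φ r' v := fun u v =>
    iff_of_eq (congrFun (congrFun ((show _ = R from hr₀).trans (show _ = R from hr').symm) u) v)
  exact ⟨φ r', (hφ r').mono hrr'.le, hsorted.imp (hsame _ _).mp⟩

end Tournament

open Tournament in
/-- A tournament belongs to `𝒞_{(r,s)}` for all positive `r`, `s`
iff it has an incomparable vertex ordering. -/
theorem mem_classC_iff_incompOrdering (T : Tournament) :
    (∀ r s : ℕ, 0 < r → 0 < s → T ∈ classC r s) ↔
      ∃ l : List T.V, IsOrdering T l ∧ IsIncompOrdering T l := by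
  constructor
  · intro h
    refine exists_incompOrdering_of_forall_rIncomp fun r => ?_
    obtain ⟨φ, hφ⟩ := exists_rIncomp_of_mem_classC
      (h (r + 1) (Fintype.card T.V + 1) r.succ_pos (Nat.succ_pos _)) (Nat.le_succ _)
    exact ⟨φ, hφ.mono r.le_succ⟩
  · rintro ⟨l, -, hl⟩ r s hr -
    obtain ⟨φ, hφ, -⟩ := hl r hr
    exact mem_classC_of_rIncomp hφ
end
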